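/- Let M = Z[t^{±1}]/(f₁(t),…,f_k(t)) and a = gcd(f₁(1),…,f_k(1)) with a > 0. Then M decomposes as the disjoint union of exactly a connected components Orb(0), Orb(1), …, Orb(a−1), where Orb(i) = { [g(t)] : g(1) ≡ i (mod a) }. -/

import Mathlib

open LaurentPolynomial

/-- Evaluation of a Laurent polynomial at `t = 1`, as a ring homomorphism. -/
noncomputable def evalOne : LaurentPolynomial ℤ →+* ℤ :=
  ((AddMonoidAlgebra.lift ℤ ℤ ℤ) 1).toRingHom

/-- The Alexander quandle operation `[α]*[β] = [tα + (1-t)β]` on `ℤ[t,t⁻¹]⧸J`. -/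
noncomputable def qOp (J : Ideal (LaurentPolynomial ℤ)) (x y : LaurentPolynomial ℤ ⧸ J) :
    LaurentPolynomial ℤ ⧸ J :=
  Ideal.Quotient.mk J (T 1) * x + (1 - Ideal.Quotient.mk J (T 1)) * y

/-- The orbit relation of the inner automorphism group. -/
def qRel (J : Ideal (LaurentPolynomial ℤ)) :
    (LaurentPolynomial ℤ ⧸ J) → (LaurentPolynomial ℤ ⧸ J) → Prop :=
  Relation.EqvGen fun x y => ∃ c, qOp J x c = y

/-- The connected component (orbit) of an element. -/
def qOrb (J : Ideal (LaurentPolynomial ℤ)) (x : LaurentPolynomial ℤ ⧸ J) :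
    Set (LaurentPolynomial ℤ ⧸ J) :=
  {y | qRel J x y}

lemma evalOne_T (n : ℤ) : evalOne (T n) = 1 := by
  show ((AddMonoidAlgebra.lift ℤ ℤ ℤ) 1) (AddMonoidAlgebra.single n (1:ℤ)) = 1
  rw [AddMonoidAlgebra.lift_single]
  simp

lemma evalOne_C (r : ℤ) : evalOne (C r) = r := by
  show ((AddMonoidAlgebra.lift ℤ ℤ ℤ) 1) (AddMonoidAlgebra.single 0 r) = r
  rw [AddMonoidAlgebra.lift_single]
  simp

lemma T_sub_one_mem (n : ℤ) :
    T n - 1 ∈ Ideal.span {T 1 - (1 : LaurentPolynomial ℤ)} := by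
  induction n using Int.induction_on with
  | zero => simp
  | succ n ih =>
      have h : (T ((n : ℤ) + 1) : LaurentPolynomial ℤ) - 1
          = T 1 * (T (n : ℤ) - 1) + (T 1 - 1) := by
        rw [T_add]; ring
      rw [h]
      exact Ideal.add_mem _ (Ideal.mul_mem_left _ _ ih) (Ideal.subset_span rfl)
  | pred n ih =>
      have h : (T (-(n : ℤ) - 1) : LaurentPolynomial ℤ) - 1
          = T (-1) * ((T (-(n : ℤ)) - 1) - (T 1 - 1)) := by
        have h1 : (T (-1) : LaurentPolynomial ℤ) * T (-(n:ℤ)) = T (-(n:ℤ) - 1) := by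
          rw [← T_add]; ring_nf
        have h2 : (T (-1) : LaurentPolynomial ℤ) * T (1:ℤ) = 1 := by
          rw [← T_add]; simp
        rw [mul_sub, mul_sub, mul_sub, h1, h2]; ring
      rw [h]
      exact Ideal.mul_mem_left _ _ (Ideal.sub_mem _ ih (Ideal.subset_span rfl))

lemma sub_C_evalOne_mem (p : LaurentPolynomial ℤ) :
    p - C (evalOne p) ∈ Ideal.span {T 1 - (1 : LaurentPolynomial ℤ)} := by
  induction p using LaurentPolynomial.induction_on' with
  | add p q hp hq =>
      have h : p + q - C (evalOne (p + q)) = (p - C (evalOne p)) + (q - C (evalOne q)) := by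
        rw [map_add, map_add]; ring
      rw [h]; exact Ideal.add_mem _ hp hq
  | C_mul_T n r =>
      have h : C r * T n - C (evalOne (C r * T n)) = C r * (T n - 1) := by
        rw [map_mul, evalOne_C, evalOne_T, mul_one]; ring
      rw [h]; exact Ideal.mul_mem_left _ _ (T_sub_one_mem n)

lemma gcd_mem_span {ι : Type*} [DecidableEq ι] (s : Finset ι) (g : ι → ℤ) :
    (s.gcd g : ℤ) ∈ Ideal.span (g '' s) := by
  induction s using Finset.induction with
  | empty => simp
  | @insert i s hi ih =>
      rw [Finset.gcd_insert, Finset.coe_insert]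
      have hspan : Ideal.span {g i, s.gcd g} ≤ Ideal.span (g '' insert i (s : Set ι)) := by
        rw [Ideal.span_le]
        rintro x hx
        rcases hx with h1 | h2
        · exact Ideal.subset_span ⟨i, Set.mem_insert i _, h1.symm⟩
        · rcases Set.mem_singleton_iff.mp h2 with rfl
          refine Ideal.span_mono ?_ ih
          rintro y ⟨j, hj, rfl⟩
          exact ⟨j, Set.mem_insert_of_mem _ hj, rfl⟩
      exact hspan (by rw [← span_gcd]; exact Ideal.subset_span rfl)

section Main

variable {k : ℕ} (f : Fin k → LaurentPolynomial ℤ) (a : ℤ)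

lemma dvd_of_mem_J (ha : a = Finset.univ.gcd fun i => evalOne (f i)) {p : LaurentPolynomial ℤ}
    (hp : p ∈ Ideal.span (Set.range f)) : a ∣ evalOne p := by
  have h1 : evalOne p ∈ Ideal.map evalOne (Ideal.span (Set.range f)) :=
    Ideal.mem_map_of_mem _ hp
  rw [Ideal.map_span] at h1
  have hle : Ideal.span (evalOne '' Set.range f) ≤ Ideal.span {a} := by
    rw [Ideal.span_le]
    rintro x ⟨q, ⟨i, rfl⟩, rfl⟩
    rw [SetLike.mem_coe, Ideal.mem_span_singleton, ha]
    exact Finset.gcd_dvd (Finset.mem_univ i)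
  exact Ideal.mem_span_singleton.mp (hle h1)

lemma mem_sup_iff_dvd (ha : a = Finset.univ.gcd fun i => evalOne (f i))
    (p : LaurentPolynomial ℤ) :
    p ∈ Ideal.span {T 1 - (1 : LaurentPolynomial ℤ)} ⊔ Ideal.span (Set.range f)
      ↔ a ∣ evalOne p := by
  constructor
  · intro hp
    rcases Submodule.mem_sup.mp hp with ⟨u, hu, v, hv, rfl⟩
    rcases Ideal.mem_span_singleton.mp hu with ⟨w, rfl⟩
    have h0 : evalOne (T 1 - 1) = 0 := by rw [map_sub, evalOne_T, map_one, sub_self]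
    rw [map_add, map_mul, h0, zero_mul, zero_add]
    exact dvd_of_mem_J f a ha hv
  · rintro ⟨m, hm⟩
    have hmem : a ∈ Ideal.span (Set.range fun i => evalOne (f i)) := by
      have h2 := gcd_mem_span Finset.univ (fun i => evalOne (f i))
      rwa [Finset.coe_univ, Set.image_univ, ← ha] at h2
    rcases Ideal.mem_span_range_iff_exists_fun.mp hmem with ⟨c, hc⟩
    set q : LaurentPolynomial ℤ := ∑ i, C (m * c i) * f i with hq
    have hqJ : q ∈ Ideal.span (Set.range f) :=
      Ideal.sum_mem _ fun i _ => Ideal.mul_mem_left _ _ (Ideal.subset_span ⟨i, rfl⟩)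
    have hqe : evalOne q = evalOne p := by
      rw [hq, map_sum]
      simp only [map_mul, evalOne_C]
      calc ∑ i, m * c i * evalOne (f i) = m * ∑ i, c i * evalOne (f i) := by
            rw [Finset.mul_sum]; exact Finset.sum_congr rfl fun i _ => by ring
        _ = m * a := by rw [hc]
        _ = evalOne p := by rw [hm]; ring
    have hker : p - q ∈ Ideal.span {T 1 - (1 : LaurentPolynomial ℤ)} := by
      have h3 := sub_C_evalOne_mem (p - q)
      rwa [map_sub, hqe, sub_self, map_zero, sub_zero] at h3
    have h4 := Submodule.add_mem_sup hker hqJ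
    rwa [sub_add_cancel] at h4

end Main

lemma qRel_iff (J : Ideal (LaurentPolynomial ℤ)) (x y : LaurentPolynomial ℤ ⧸ J) :
    qRel J x y ↔ ∃ m, y - x = (1 - Ideal.Quotient.mk J (T 1)) * m := by
  have hstep : ∀ u v : LaurentPolynomial ℤ ⧸ J,
      (∃ c, qOp J u c = v) ↔ ∃ m, v - u = (1 - Ideal.Quotient.mk J (T 1)) * m := by
    intro u v
    constructor
    · rintro ⟨c, rfl⟩
      exact ⟨c - u, by simp only [qOp]; ring⟩
    · rintro ⟨m, hm⟩
      refine ⟨u + m, ?_⟩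
      simp only [qOp]
      rw [sub_eq_iff_eq_add.mp hm]; ring
  have heq : Equivalence (fun x y : LaurentPolynomial ℤ ⧸ J => ∃ c, qOp J x c = y) := by
    constructor
    · intro x; rw [hstep]; exact ⟨0, by rw [mul_zero, sub_self]⟩
    · intro x y h; rw [hstep] at h ⊢
      rcases h with ⟨m, hm⟩
      exact ⟨-m, by linear_combination -hm⟩
    · intro x y z h1 h2; rw [hstep] at h1 h2 ⊢
      rcases h1 with ⟨m1, hm1⟩; rcases h2 with ⟨m2, hm2⟩
      exact ⟨m1 + m2, by linear_combination hm1 + hm2⟩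
  rw [show qRel J x y ↔ _ from heq.eqvGen_iff, hstep]

lemma qOrb_eq {k : ℕ} (f : Fin k → LaurentPolynomial ℤ) (a : ℤ)
    (ha : a = Finset.univ.gcd fun i => evalOne (f i)) (p : LaurentPolynomial ℤ) :
    qOrb (Ideal.span (Set.range f)) (Ideal.Quotient.mk _ p) =
      {x | ∃ g : LaurentPolynomial ℤ,
        Ideal.Quotient.mk (Ideal.span (Set.range f)) g = x ∧
        evalOne g ≡ evalOne p [ZMOD a]} := by
  set J := Ideal.span (Set.range f) with hJ
  ext x
  obtain ⟨h, rfl⟩ := Ideal.Quotient.mk_surjective x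
  simp only [qOrb, Set.mem_setOf_eq]
  rw [qRel_iff]
  constructor
  · rintro ⟨m, hm⟩
    obtain ⟨w, rfl⟩ := Ideal.Quotient.mk_surjective m
    have h0 : Ideal.Quotient.mk J (h - p - (1 - T 1) * w) = 0 := by
      rw [map_sub, map_sub, map_mul, map_sub, map_one, ← hm]
      ring
    have hmemJ : h - p - (1 - T 1) * w ∈ J := Ideal.Quotient.eq_zero_iff_mem.mp h0
    have h1 : (1 - T 1) * w ∈ Ideal.span {T 1 - (1 : LaurentPolynomial ℤ)} :=
      Ideal.mem_span_singleton.mpr ⟨-w, by ring⟩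
    have hmemI : h - p ∈ Ideal.span {T 1 - (1 : LaurentPolynomial ℤ)} ⊔ J := by
      have h2 := Submodule.add_mem_sup h1 hmemJ
      rwa [add_sub_cancel] at h2
    have hdvd : a ∣ evalOne h - evalOne p := by
      have := (mem_sup_iff_dvd f a ha (h - p)).mp hmemI
      rwa [map_sub] at this
    exact ⟨h, rfl, Int.modEq_iff_dvd.mpr (dvd_sub_comm.mp hdvd)⟩
  · rintro ⟨g, hg, hcong⟩
    have hgh : g - h ∈ J := Ideal.Quotient.eq.mp hg
    have h1 : g - p ∈ Ideal.span {T 1 - (1 : LaurentPolynomial ℤ)} ⊔ J := by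
      rw [mem_sup_iff_dvd f a ha, map_sub]
      exact dvd_sub_comm.mp (Int.modEq_iff_dvd.mp hcong)
    have hmemI : h - p ∈ Ideal.span {T 1 - (1 : LaurentPolynomial ℤ)} ⊔ J := by
      have h2 : h - p = (g - p) - (g - h) := by ring
      rw [h2]
      exact Submodule.sub_mem _ h1 (Ideal.mem_sup_right hgh)
    rcases Submodule.mem_sup.mp hmemI with ⟨u, hu, v, hv, huv⟩
    rcases Ideal.mem_span_singleton.mp hu with ⟨w, rfl⟩
    refine ⟨Ideal.Quotient.mk J (-w), ?_⟩
    have h3 : Ideal.Quotient.mk J v = 0 := Ideal.Quotient.eq_zero_iff_mem.mpr hv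
    rw [← map_sub, ← huv, map_add, h3, add_zero, map_mul, map_sub, map_one, map_neg]
    ring

/-- Let `M = ℤ[t,t⁻¹]/(f₁,…,f_k)` and `a = gcd(f₁(1),…,f_k(1)) > 0`. Then `M`
is the disjoint union of exactly the `a` connected components
`Orb(0), Orb(1), …, Orb(a-1)`, where
`Orb(i) = { [g] : g(1) ≡ i (mod a) }`. -/
theorem stmt_6 {k : ℕ} (f : Fin k → LaurentPolynomial ℤ)
    (a : ℤ) (ha : a = Finset.univ.gcd fun i => evalOne (f i)) (hapos : 0 < a) :
    (⋃ i ∈ Finset.range a.toNat,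
        qOrb (Ideal.span (Set.range f))
          (Ideal.Quotient.mk _ ((i : ℤ) : LaurentPolynomial ℤ)) = Set.univ) ∧
    (∀ i ∈ Finset.range a.toNat, ∀ j ∈ Finset.range a.toNat, i ≠ j →
        Disjoint
          (qOrb (Ideal.span (Set.range f))
            (Ideal.Quotient.mk _ ((i : ℤ) : LaurentPolynomial ℤ)))
          (qOrb (Ideal.span (Set.range f))
            (Ideal.Quotient.mk _ ((j : ℤ) : LaurentPolynomial ℤ)))) ∧
    (∀ i : ℤ,
        qOrb (Ideal.span (Set.range f)) (Ideal.Quotient.mk _ (i : LaurentPolynomial ℤ)) =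
          {x | ∃ g : LaurentPolynomial ℤ,
            Ideal.Quotient.mk (Ideal.span (Set.range f)) g = x ∧ evalOne g ≡ i [ZMOD a]}) := by
  have key : ∀ i : ℤ,
      qOrb (Ideal.span (Set.range f)) (Ideal.Quotient.mk _ (i : LaurentPolynomial ℤ)) =
        {x | ∃ g : LaurentPolynomial ℤ,
          Ideal.Quotient.mk (Ideal.span (Set.range f)) g = x ∧ evalOne g ≡ i [ZMOD a]} := by
    intro i
    have hcast : evalOne ((i : ℤ) : LaurentPolynomial ℤ) = i := map_intCast evalOne i
    rw [qOrb_eq f a ha, hcast]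
  refine ⟨?_, ?_, key⟩
  · ext x
    simp only [Set.mem_iUnion, Set.mem_univ, iff_true, Finset.mem_range]
    obtain ⟨g, rfl⟩ := Ideal.Quotient.mk_surjective x
    set r : ℤ := evalOne g % a with hr
    have hr0 : 0 ≤ r := Int.emod_nonneg _ (ne_of_gt hapos)
    have hr1 : r < a := Int.emod_lt_of_pos _ hapos
    refine ⟨r.toNat, by omega, ?_⟩
    have hcast : ((r.toNat : ℤ)) = r := Int.toNat_of_nonneg hr0
    rw [key, hcast]
    refine ⟨g, rfl, ?_⟩
    show evalOne g % a = r % a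
    rw [hr, Int.emod_emod_of_dvd _ dvd_rfl]
  · intro i hi j hj hij
    rw [Finset.mem_range] at hi hj
    rw [Set.disjoint_left]
    intro x hx hx'
    rw [key] at hx hx'
    obtain ⟨g, hg, hgi⟩ := hx
    obtain ⟨g', hg', hgj⟩ := hx'
    have hgg : g - g' ∈ Ideal.span (Set.range f) :=
      Ideal.Quotient.eq.mp (hg.trans hg'.symm)
    have hdvd : a ∣ evalOne g - evalOne g' := by
      have := dvd_of_mem_J f a ha hgg
      rwa [map_sub] at this
    have hmodeq : (i : ℤ) ≡ (j : ℤ) [ZMOD a] := by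
      calc (i : ℤ) ≡ evalOne g [ZMOD a] := hgi.symm
        _ ≡ evalOne g' [ZMOD a] := (Int.modEq_iff_dvd.mpr (dvd_sub_comm.mp hdvd))
        _ ≡ (j : ℤ) [ZMOD a] := hgj
    have hi' : (i : ℤ) % a = (i : ℤ) := Int.emod_eq_of_lt (by positivity) (by omega)
    have hj' : (j : ℤ) % a = (j : ℤ) := Int.emod_eq_of_lt (by positivity) (by omega)
    have : (i : ℤ) = (j : ℤ) := by
      have h4 : (i : ℤ) % a = (j : ℤ) % a := hmodeq
      rwa [hi', hj'] at h4
    exact hij (by exact_mod_cast this)
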